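/- arXiv:1810.04650 — 2 statements merged into one kernel-verified Lean document; each statement's English description precedes it below -/
import Mathlib

section
/- Let M be a symmetric positive definite n×n real matrix and g₁, …, g_T ∈ ℝⁿ. Let α minimize the quadratic form (Σ_t α^t g_t)ᵀ M (Σ_t α^t g_t) over the probability simplex, with v = Σ_t α^t g_t. Then for every t, gᵗ_t M v ≥ vᵀ M v ≥ 0; in particular ⟨Mv, g_t⟩ ≥ 0 for all t. -/
open Matrix

theorem stmt_7 {n T : ℕ} (M : Matrix (Fin n) (Fin n) ℝ) (hM : M.PosDef)
    (g : Fin T → (Fin n → ℝ))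
    (α : Fin T → ℝ) (hα0 : ∀ t, 0 ≤ α t) (hα1 : ∑ t, α t = 1)
    (v : Fin n → ℝ) (hv : v = ∑ t, α t • g t)
    (hmin : ∀ β : Fin T → ℝ, (∀ t, 0 ≤ β t) → ∑ t, β t = 1 →
      v ⬝ᵥ M.mulVec v ≤ (∑ t, β t • g t) ⬝ᵥ M.mulVec (∑ t, β t • g t)) :
    (∀ t, g t ⬝ᵥ M.mulVec v ≥ v ⬝ᵥ M.mulVec v) ∧
    v ⬝ᵥ M.mulVec v ≥ 0 ∧
    (∀ t, M.mulVec v ⬝ᵥ g t ≥ 0) := by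
  have hsym : ∀ a b : Fin n → ℝ, a ⬝ᵥ M.mulVec b = b ⬝ᵥ M.mulVec a := by
    intro a b
    rw [dotProduct_mulVec, dotProduct_comm, ← mulVec_transpose,
      show Mᵀ = M from hM.isHermitian]
  have hPSD : ∀ a : Fin n → ℝ, 0 ≤ a ⬝ᵥ M.mulVec a := by
    intro a
    simpa using hM.posSemidef.dotProduct_mulVec_nonneg a
  have key : ∀ t, 0 ≤ (g t - v) ⬝ᵥ M.mulVec v := by
    intro t
    set w := g t - v with hw
    set c := w ⬝ᵥ M.mulVec v with hc
    set d := w ⬝ᵥ M.mulVec w with hd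
    have hd0 : 0 ≤ d := hPSD w
    have hq : ∀ ε : ℝ, 0 < ε → ε ≤ 1 → 0 ≤ 2 * c + ε * d := by
      intro ε hε0 hε1
      set β : Fin T → ℝ := fun s => (1 - ε) * α s + ε * (if s = t then 1 else 0) with hβ
      have hβ0 : ∀ s, 0 ≤ β s := by
        intro s
        have := hα0 s
        simp only [hβ]
        apply add_nonneg
        · exact mul_nonneg (by linarith) this
        · exact mul_nonneg hε0.le (by split <;> norm_num)
      have hβ1 : ∑ s, β s = 1 := by
        simp only [hβ, Finset.sum_add_distrib, ← Finset.mul_sum, hα1,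
          Finset.sum_ite_eq' Finset.univ t, Finset.mem_univ, if_true]
        ring
      have hβv : ∑ s, β s • g s = v + ε • w := by
        have h1 : ∑ s, β s • g s
            = ∑ s, ((1 - ε) • (α s • g s)) + ∑ s, (ε • ((if s = t then (1:ℝ) else 0) • g s)) := by
          rw [← Finset.sum_add_distrib]
          congr 1
          funext s
          funext i
          simp only [hβ, Pi.add_apply, Pi.smul_apply, smul_eq_mul]
          split_ifs <;> ring
        have h2 : ∑ s, ((if s = t then (1:ℝ) else 0) • g s) = g t := by
          simp [Finset.sum_ite_eq' Finset.univ t]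
        rw [h1, ← Finset.smul_sum, ← Finset.smul_sum, h2, ← hv, hw]
        ext i
        simp
        ring
      have h := hmin β hβ0 hβ1
      rw [hβv] at h
      have hexp : (v + ε • w) ⬝ᵥ M.mulVec (v + ε • w) =
          v ⬝ᵥ M.mulVec v + ε * (w ⬝ᵥ M.mulVec v + v ⬝ᵥ M.mulVec w) + ε^2 * d := by
        simp only [mulVec_add, mulVec_smul, dotProduct_add, add_dotProduct,
          smul_dotProduct, dotProduct_smul, smul_eq_mul, hd]
        ring
      rw [hexp, hsym v w] at h
      nlinarith
    by_contra hcon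
    push_neg at hcon
    have hc0 : c < 0 := hcon
    have hε0 : 0 < min 1 ((-c) / (d + 1)) := by
      apply lt_min one_pos
      apply div_pos (by linarith) (by linarith)
    have hε1 : min 1 ((-c) / (d + 1)) ≤ 1 := min_le_left _ _
    have h := hq _ hε0 hε1
    have h2 : min 1 ((-c) / (d + 1)) ≤ (-c) / (d + 1) := min_le_right _ _
    have h3 : min 1 ((-c) / (d + 1)) * d ≤ ((-c) / (d + 1)) * d := by
      apply mul_le_mul_of_nonneg_right h2 hd0
    have h4 : ((-c) / (d + 1)) * d ≤ -c := by
      rw [div_mul_eq_mul_div, div_le_iff₀ (by linarith)]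
      nlinarith
    linarith
  refine ⟨fun t => ?_, hPSD v, fun t => ?_⟩
  · have := key t
    rw [sub_dotProduct] at this
    linarith
  · rw [dotProduct_comm]
    have := key t
    rw [sub_dotProduct] at this
    have := hPSD v
    linarith
end

section
/- Let A be an m×n real matrix with trivial kernel and g₁, …, g_T ∈ ℝⁿ. Let α minimize ‖A(Σ_t α^t g_t)‖² over the probability simplex, and suppose d := Σ_t α^t A g_t ≠ 0. Then ⟨d, A g_t⟩ ≥ 0 for every t, i.e., −d does not increase any of the linear functionals x ↦ ⟨A g_t, x⟩ to first order. -/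
theorem stmt_8 {n m T : ℕ}
    (A : EuclideanSpace ℝ (Fin n) →L[ℝ] EuclideanSpace ℝ (Fin m))
    (hA : Function.Injective A) (g : Fin T → EuclideanSpace ℝ (Fin n))
    (α : Fin T → ℝ) (hα0 : ∀ t, 0 ≤ α t) (hα1 : ∑ t, α t = 1)
    (hmin : ∀ β : Fin T → ℝ, (∀ t, 0 ≤ β t) → ∑ t, β t = 1 →
      ‖A (∑ t, α t • g t)‖ ^ 2 ≤ ‖A (∑ t, β t • g t)‖ ^ 2)
    (d : EuclideanSpace ℝ (Fin m)) (hd : d = ∑ t, α t • A (g t)) (hd0 : d ≠ 0) :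
    ∀ t, (inner ℝ d (A (g t)) : ℝ) ≥ 0 := by
  intro t
  set v := A (g t) with hv
  have hdA : d = A (∑ t, α t • g t) := by
    rw [hd, map_sum]
    simp [map_smul]
  have key : (0:ℝ) ≤ inner ℝ d (v - d) := by
    by_contra hc
    push_neg at hc
    set c : ℝ := inner ℝ d (v - d) with hcdef
    set k : ℝ := ‖v - d‖ ^ 2 with hkdef
    have hk0 : 0 ≤ k := sq_nonneg _
    set s : ℝ := min 1 (-c / (k + 1)) with hsdef
    have hs0 : 0 < s := lt_min one_pos (div_pos (neg_pos.2 hc) (by linarith))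
    have hs1 : s ≤ 1 := min_le_left _ _
    have hsk : s * (k + 1) ≤ -c := by
      have h2 : s ≤ -c / (k + 1) := min_le_right _ _
      calc s * (k + 1) ≤ (-c / (k + 1)) * (k + 1) := by
            apply mul_le_mul_of_nonneg_right h2 (by linarith)
        _ = -c := by field_simp
    have hmin' := hmin (fun t' => (1 - s) * α t' + s * (if t' = t then 1 else 0))
      (fun t' => by
        have := hα0 t'
        have : 0 ≤ (1 - s) * α t' := mul_nonneg (by linarith) this
        positivity)
      (by
        rw [Finset.sum_add_distrib, ← Finset.mul_sum, hα1, ← Finset.mul_sum]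
        simp)
    have hsum : (∑ t', ((1 - s) * α t' + s * (if t' = t then 1 else 0)) • g t')
        = (1 - s) • (∑ t', α t' • g t') + s • g t := by
      simp only [add_smul]
      rw [Finset.sum_add_distrib]
      congr 1
      · rw [Finset.smul_sum]
        exact Finset.sum_congr rfl fun t' _ => by rw [mul_smul]
      · simp [mul_ite, mul_one, mul_zero, ite_smul, zero_smul]
    have hAeq : A (∑ t', ((1 - s) * α t' + s * (if t' = t then 1 else 0)) • g t')
        = d + s • (v - d) := by
      rw [hsum, map_add, map_smul, map_smul, ← hdA, ← hv]
      module
    rw [hAeq, ← hdA] at hmin'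
    have hexp : ‖d + s • (v - d)‖ ^ 2 = ‖d‖ ^ 2 + 2 * (s * c) + s ^ 2 * k := by
      rw [norm_add_sq_real, real_inner_smul_right, norm_smul, mul_pow]
      simp [← hcdef, ← hkdef, abs_of_pos hs0]
    rw [hexp] at hmin'
    nlinarith [sq_nonneg s, mul_pos hs0 hs0]
  have hinner : (inner ℝ d (v - d) : ℝ) = inner ℝ d v - ‖d‖ ^ 2 := by
    rw [inner_sub_right, real_inner_self_eq_norm_sq]
  rw [hinner] at key
  have := sq_nonneg ‖d‖
  linarith
end
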